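/- arXiv:1112.5480 — 4 statements merged into one kernel-verified Lean document; each statement's English description precedes it below -/
import Mathlib

section
/- Let g ∈ ℝ^L, ε⁰, ε¹ ∈ ℝ^L with ε⁰ᵢ, ε¹ᵢ > 0 for all i, and define g'ᵢ = (gᵢ - g_{i-1})/ε¹ᵢ for i = 2,…,L. If ∑_{i=1}^L ε⁰ᵢ gᵢ = 0, then for every index i, |gᵢ| ≤ (1/h) ∑_{k=2}^L ε¹ₖ |g'ₖ| φ_{i,k}, where h = ∑_{i=1}^L ε⁰ᵢ, φ_{i,k} = ∑_{ℓ=1}^{k-1} ε⁰ℓ for k = 2,…,i and φ_{i,k} = ∑_{ℓ=k}^{L} ε⁰ℓ for k = i+1,…,L. -/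
open Finset

/-
Since the weighted mean of `g` vanishes, `h * g i = ∑ⱼ ε⁰ⱼ (g i - g j)`, so `h |g i|` is at most
`∑ⱼ ε⁰ⱼ |g i - g j|`. Each `|g i - g j|` is bounded by the sum of the increments `|g k - g (k-1)|`
over the `k` lying between `j` and `i`; exchanging the two sums, the increment at `k` collects the
weight `ε⁰ⱼ` of exactly those `j` on the far side of `k` from `i`, which is `φ_{i,k}`.
-/

theorem norm_sub_le_sum_Ioc_norm_sub {E : Type*} [SeminormedAddCommGroup E] (f : ℕ → E)
    {a b : ℕ} (hab : a ≤ b) : ‖f b - f a‖ ≤ ∑ k ∈ Ioc a b, ‖f k - f (k - 1)‖ := by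
  induction b, hab using Nat.le_induction with
  | base => simp
  | succ b hab ih =>
    rw [sum_Ioc_succ_top hab, Nat.add_sub_cancel]
    calc ‖f (b + 1) - f a‖ ≤ ‖f (b + 1) - f b‖ + ‖f b - f a‖ :=
          norm_sub_le_norm_sub_add_norm_sub _ _ _
      _ ≤ _ := by linarith

theorem abs_sub_le_sum_Ioc_min_max (g : ℕ → ℝ) (i j : ℕ) :
    |g i - g j| ≤ ∑ k ∈ Ioc (min i j) (max i j), |g k - g (k - 1)| := by
  rcases le_total i j with h | h
  · rw [min_eq_left h, max_eq_right h, abs_sub_comm]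
    simpa only [Real.norm_eq_abs] using norm_sub_le_sum_Ioc_norm_sub g h
  · rw [min_eq_right h, max_eq_left h]
    simpa only [Real.norm_eq_abs] using norm_sub_le_sum_Ioc_norm_sub g h

theorem sum_mul_abs_le_sum_mul_abs_sub_of_sum_mul_eq_zero {ι : Type*} {s : Finset ι}
    {w g : ι → ℝ} (hw : ∀ j ∈ s, 0 ≤ w j) (hmean : ∑ j ∈ s, w j * g j = 0) (i : ι) :
    (∑ j ∈ s, w j) * |g i| ≤ ∑ j ∈ s, w j * |g i - g j| := by
  have hshift : (∑ j ∈ s, w j) * g i = ∑ j ∈ s, w j * (g i - g j) := by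
    rw [sum_mul, ← sub_zero (∑ j ∈ s, w j * g i), ← hmean, ← sum_sub_distrib]
    simp only [mul_sub]
  calc (∑ j ∈ s, w j) * |g i| = |(∑ j ∈ s, w j) * g i| := by
        rw [abs_mul, abs_of_nonneg (sum_nonneg hw)]
    _ = |∑ j ∈ s, w j * (g i - g j)| := by rw [hshift]
    _ ≤ ∑ j ∈ s, |w j * (g i - g j)| := abs_sum_le_sum_abs _ _
    _ = ∑ j ∈ s, w j * |g i - g j| :=
        sum_congr rfl fun j hj => by rw [abs_mul, abs_of_nonneg (hw j hj)]

theorem sum_mul_sum_Ioc_min_max_eq {L i : ℕ} (hi : i ∈ Icc 1 L) (w d : ℕ → ℝ) :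
    ∑ j ∈ Icc 1 L, w j * ∑ k ∈ Ioc (min i j) (max i j), d k =
      ∑ k ∈ Icc 2 L, d k *
        (if k ≤ i then ∑ l ∈ Icc 1 (k - 1), w l else ∑ l ∈ Icc k L, w l) := by
  simp only [mul_sum, mul_ite]
  rw [sum_comm' (t' := Icc 2 L)
    (s' := fun k => if k ≤ i then Icc 1 (k - 1) else Icc k L)]
  · refine sum_congr rfl fun k _ => ?_
    split_ifs <;> exact sum_congr rfl fun _ _ => mul_comm _ _
  · intro j k
    rw [mem_Icc] at hi
    split_ifs <;> simp only [mem_Icc, mem_Ioc] <;> omega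

/-- Lemma B.1 (pre-Poincaré pointwise bound). -/
theorem pre_poincare_pointwise (L : ℕ) (hL : 1 ≤ L) (g ε0 ε1 : ℕ → ℝ)
    (hε0 : ∀ i ∈ Finset.Icc 1 L, 0 < ε0 i)
    (hε1 : ∀ i ∈ Finset.Icc 1 L, 0 < ε1 i)
    (hmean : ∑ i ∈ Finset.Icc 1 L, ε0 i * g i = 0) :
    ∀ i ∈ Finset.Icc 1 L,
      |g i| ≤ (1 / ∑ j ∈ Finset.Icc 1 L, ε0 j) *
        ∑ k ∈ Finset.Icc 2 L, ε1 k * |(g k - g (k - 1)) / ε1 k| *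
          (if k ≤ i then ∑ l ∈ Finset.Icc 1 (k - 1), ε0 l
           else ∑ l ∈ Finset.Icc k L, ε0 l) := by
  intro i hi
  have hmass : 0 < ∑ j ∈ Icc 1 L, ε0 j := sum_pos hε0 ⟨1, mem_Icc.mpr ⟨le_rfl, hL⟩⟩
  have hincr : ∀ k ∈ Icc 2 L, ε1 k * |(g k - g (k - 1)) / ε1 k| = |g k - g (k - 1)| := by
    intro k hk
    have hpos := hε1 k (Icc_subset_Icc_left one_le_two hk)
    rw [abs_div, abs_of_pos hpos, mul_div_cancel₀ _ hpos.ne']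
  rw [sum_congr rfl fun k hk => congrArg (· * _) (hincr k hk), one_div_mul_eq_div,
    le_div_iff₀ hmass, mul_comm]
  calc (∑ j ∈ Icc 1 L, ε0 j) * |g i| ≤ ∑ j ∈ Icc 1 L, ε0 j * |g i - g j| :=
        sum_mul_abs_le_sum_mul_abs_sub_of_sum_mul_eq_zero (fun j hj => (hε0 j hj).le) hmean i
    _ ≤ ∑ j ∈ Icc 1 L, ε0 j * ∑ k ∈ Ioc (min i j) (max i j), |g k - g (k - 1)| :=
        sum_le_sum fun j hj =>
          mul_le_mul_of_nonneg_left (abs_sub_le_sum_Ioc_min_max g i j) (hε0 j hj).le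
    _ = _ := sum_mul_sum_Ioc_min_max_eq hi _ _
end

section
/- Discrete Poincaré inequality on a non-uniform mesh: Let L ≥ 1, ε⁰, ε¹ ∈ ℝ^L with all entries positive, g ∈ ℝ^L with ∑_{i=1}^L ε⁰ᵢ gᵢ = 0, and g'ᵢ = (gᵢ - g_{i-1})/ε¹ᵢ for i = 2,…,L. Then ∑_{i=1}^L ε⁰ᵢ |gᵢ| ≤ (1/2) · (L² · max{max_i ε⁰ᵢ, max_k ε¹ₖ}² / h) · ∑_{k=2}^L ε¹ₖ |g'ₖ|, where h = ∑_{i=1}^L ε⁰ᵢ. -/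
/-!
Mean zero with positive weights forces `min g ≤ 0 ≤ max g`. On `[min g, max g]` the convex
function `|·|` lies below its chord; integrating the chord against the weights `ε⁰` kills its
linear part, and AM–GM bounds what is left, giving `∑ ε⁰ᵢ |gᵢ| ≤ h (max g - min g) / 2`.
The oscillation `max g - min g` is at most the total variation `∑ |gₖ - gₖ₋₁| = ∑ ε¹ₖ |g'ₖ|`,
and `h ≤ L max ε⁰` turns `h / 2` into the stated constant.
-/

open Finset

-- `|x|` lies below its chord over `[a, b]`.
theorem sub_mul_abs_le_of_mem_Icc {a b x : ℝ} (ha : a ≤ 0) (hb : 0 ≤ b) (hx : x ∈ Set.Icc a b) :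
    (b - a) * |x| ≤ (a + b) * x - 2 * a * b := by
  obtain ⟨hax, hxb⟩ := hx
  rcases le_total 0 x with h0 | h0
  · rw [abs_of_nonneg h0]; nlinarith
  · rw [abs_of_nonpos h0]; nlinarith

theorem sum_mul_abs_le_of_sum_mul_eq_zero {ι : Type*} {s : Finset ι} {w g : ι → ℝ} {a b : ℝ}
    (hw : ∀ i ∈ s, 0 ≤ w i) (hmean : ∑ i ∈ s, w i * g i = 0) (ha : a ≤ 0) (hb : 0 ≤ b)
    (hg : ∀ i ∈ s, g i ∈ Set.Icc a b) :
    ∑ i ∈ s, w i * |g i| ≤ (∑ i ∈ s, w i) * (b - a) / 2 := by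
  rcases (ha.trans hb).eq_or_lt with hab | hab
  · have hg0 : ∀ i ∈ s, g i = 0 := fun i hi ↦ by
      obtain ⟨h₁, h₂⟩ := hg i hi
      linarith
    rw [sum_eq_zero fun i hi ↦ by rw [hg0 i hi, abs_zero, mul_zero], hab, sub_self, mul_zero,
      zero_div]
  have hW : 0 ≤ ∑ i ∈ s, w i := sum_nonneg hw
  refine le_of_mul_le_mul_left ?_ (sub_pos.2 hab)
  calc (b - a) * ∑ i ∈ s, w i * |g i| = ∑ i ∈ s, w i * ((b - a) * |g i|) := by
        rw [mul_sum]; exact sum_congr rfl fun i _ ↦ by ring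
    _ ≤ ∑ i ∈ s, w i * ((a + b) * g i - 2 * a * b) :=
        sum_le_sum fun i hi ↦ mul_le_mul_of_nonneg_left
          (sub_mul_abs_le_of_mem_Icc ha hb (hg i hi)) (hw i hi)
    _ = (a + b) * ∑ i ∈ s, w i * g i - 2 * a * b * ∑ i ∈ s, w i := by
        simp only [mul_sub, sum_sub_distrib, mul_sum]
        congr 1 <;> exact sum_congr rfl fun i _ ↦ by ring
    _ ≤ (b - a) * ((∑ i ∈ s, w i) * (b - a) / 2) := by
        rw [hmean]; nlinarith [mul_nonneg hW (sq_nonneg (a + b))]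

theorem exists_sum_mul_abs_le_mul_sub_of_sum_mul_eq_zero {ι : Type*} {s : Finset ι} {w g : ι → ℝ}
    (hs : s.Nonempty) (hw : ∀ i ∈ s, 0 < w i) (hmean : ∑ i ∈ s, w i * g i = 0) :
    ∃ p ∈ s, ∃ q ∈ s, ∑ i ∈ s, w i * |g i| ≤ (∑ i ∈ s, w i) * (g p - g q) / 2 := by
  obtain ⟨p, hp, hmax⟩ := s.exists_max_image g hs
  obtain ⟨q, hq, hmin⟩ := s.exists_min_image g hs
  obtain ⟨i, hi, hneg⟩ := exists_le_of_sum_le hs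
    (f := fun i ↦ w i * g i) (g := fun _ ↦ 0) (by rw [hmean, sum_const_zero])
  obtain ⟨j, hj, hpos⟩ := exists_le_of_sum_le hs
    (f := fun _ ↦ 0) (g := fun i ↦ w i * g i) (by rw [hmean, sum_const_zero])
  refine ⟨p, hp, q, hq, sum_mul_abs_le_of_sum_mul_eq_zero (fun i hi ↦ (hw i hi).le) hmean
    ((hmin i hi).trans (nonpos_of_mul_nonpos_right hneg (hw i hi)))
    ((nonneg_of_mul_nonneg_right hpos (hw j hj)).trans (hmax j hj))
    fun i hi ↦ ⟨hmin i hi, hmax i hi⟩⟩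

theorem abs_sub_le_sum_Ioc_abs_sub_pred (g : ℕ → ℝ) {lo hi m n : ℕ} (hm : m ∈ Icc lo hi)
    (hn : n ∈ Icc lo hi) : |g m - g n| ≤ ∑ k ∈ Ioc lo hi, |g k - g (k - 1)| := by
  wlog hnm : n ≤ m generalizing m n
  · rw [abs_sub_comm]; exact this hn hm (by omega)
  rw [mem_Icc] at hm hn
  calc |g m - g n| = dist (g n) (g m) := by rw [Real.dist_eq, abs_sub_comm]
    _ ≤ ∑ i ∈ Ico n m, dist (g i) (g (i + 1)) := dist_le_Ico_sum_dist g hnm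
    _ = ∑ k ∈ Ioc n m, |g k - g (k - 1)| := by
        rw [← Ico_add_one_add_one_eq_Ioc, ← sum_Ico_add']
        exact sum_congr rfl fun i _ ↦ by rw [Real.dist_eq, abs_sub_comm, Nat.add_sub_cancel]
    _ ≤ ∑ k ∈ Ioc lo hi, |g k - g (k - 1)| :=
        sum_le_sum_of_subset_of_nonneg (Ioc_subset_Ioc hn.1 hm.2) fun _ _ _ ↦ abs_nonneg _

theorem Finset.le_ciSup_of_mem {ι α : Type*} [ConditionallyCompleteLattice α] {s : Finset ι}
    (f : ι → α) {i : ι} (hi : i ∈ s) : f i ≤ ⨆ j ∈ s, f j :=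
  le_ciSup₂ (f := fun j (_ : j ∈ s) ↦ f j)
    ((s.finite_toSet.image f).bddAbove.mono <| by
      rintro _ ⟨_, ⟨j, rfl⟩, ⟨hj, rfl⟩⟩; exact ⟨j, hj, rfl⟩) i hi

/-- Discrete Poincaré inequality (ℓ¹ version) on a non-uniform mesh. -/
theorem discrete_poincare_l1 (L : ℕ) (hL : 1 ≤ L) (g ε0 ε1 : ℕ → ℝ)
    (hε0 : ∀ i ∈ Finset.Icc 1 L, 0 < ε0 i)
    (hε1 : ∀ i ∈ Finset.Icc 1 L, 0 < ε1 i)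
    (hmean : ∑ i ∈ Finset.Icc 1 L, ε0 i * g i = 0) :
    ∑ i ∈ Finset.Icc 1 L, ε0 i * |g i| ≤
      (1 / 2) * ((L : ℝ) ^ 2 *
          (max (⨆ i ∈ Finset.Icc 1 L, ε0 i) (⨆ k ∈ Finset.Icc 2 L, ε1 k)) ^ 2 /
          ∑ i ∈ Finset.Icc 1 L, ε0 i) *
        ∑ k ∈ Finset.Icc 2 L, ε1 k * |(g k - g (k - 1)) / ε1 k| := by
  set M := max (⨆ i ∈ Icc 1 L, ε0 i) (⨆ k ∈ Icc 2 L, ε1 k)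
  set h := ∑ i ∈ Icc 1 L, ε0 i
  have hh : 0 < h := sum_pos hε0 (nonempty_Icc.2 hL)
  have hhLM : h ≤ L * M := by
    simpa using sum_le_card_nsmul _ _ M fun i hi ↦ (Finset.le_ciSup_of_mem ε0 hi).trans (le_max_left _ _)
  have hvar : ∑ k ∈ Icc 2 L, ε1 k * |(g k - g (k - 1)) / ε1 k| =
      ∑ k ∈ Ioc 1 L, |g k - g (k - 1)| := by
    rw [← Icc_add_one_left_eq_Ioc]
    refine sum_congr rfl fun k hk ↦ ?_
    have hk : 0 < ε1 k := hε1 k (Icc_subset_Icc_left (by norm_num) hk)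
    rw [abs_div, abs_of_pos hk, mul_div_cancel₀ _ hk.ne']
  obtain ⟨p, hp, q, hq, hosc⟩ :=
    exists_sum_mul_abs_le_mul_sub_of_sum_mul_eq_zero (nonempty_Icc.2 hL) hε0 hmean
  have hhM : h ≤ L ^ 2 * M ^ 2 / h := by
    rw [le_div_iff₀ hh, ← sq, ← mul_pow]
    exact pow_le_pow_left₀ hh.le hhLM 2
  set V := ∑ k ∈ Ioc 1 L, |g k - g (k - 1)|
  have hV : 0 ≤ V := sum_nonneg fun k _ ↦ abs_nonneg _
  have hpq : g p - g q ≤ V := (le_abs_self _).trans (abs_sub_le_sum_Ioc_abs_sub_pred g hp hq)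
  rw [hvar]
  calc ∑ i ∈ Icc 1 L, ε0 i * |g i| ≤ h * (g p - g q) / 2 := hosc
    _ ≤ h / 2 * V := by nlinarith
    _ ≤ 1 / 2 * (L ^ 2 * M ^ 2 / h) * V := mul_le_mul_of_nonneg_right (by linarith) hV
end

section
/- Discrete Poincaré inequality in the sup norm: Let L ≥ 1, ε⁰, ε¹ ∈ ℝ^L with all entries positive, g ∈ ℝ^L with ∑_{i=1}^L ε⁰ᵢ gᵢ = 0, and g'ᵢ = (gᵢ - g_{i-1})/ε¹ᵢ for i = 2,…,L. Then max_{1 ≤ i ≤ L} |gᵢ| ≤ (1/2) · (L² · max_{1≤i≤L} ε⁰ᵢ / h) · max_{2 ≤ k ≤ L} ε¹ₖ |g'ₖ|, where h = ∑_{i=1}^L ε⁰ᵢ. -/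
/-!
Subtracting the weighted mean condition gives `gᵢ · h = ∑ⱼ ε⁰ⱼ (gᵢ - gⱼ)`. Telescoping bounds
`|gᵢ - gⱼ|` by `|i - j|` times the largest jump `M = maxₖ |gₖ - gₖ₋₁|`, so
`|gᵢ| · h ≤ (max ε⁰) · M · ∑ⱼ |i - j|`, and pairing `j` with its mirror image `L + 1 - j` shows
`∑ⱼ |i - j| ≤ L (L - 1) / 2`.
-/

open Finset

theorem Finset.le_ciSup₂_of_mem {ι α : Type*} [ConditionallyCompleteLattice α] {s : Finset ι}
    {f : ι → α} {i : ι} (hi : i ∈ s) : f i ≤ ⨆ j ∈ s, f j :=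
  le_ciSup₂ (f := fun j _ => f j)
    ((s.finite_toSet.image f).bddAbove.mono <|
      Set.iUnion_subset fun _ => Set.range_subset_iff.2 fun hj => Set.mem_image_of_mem f hj) i hi

theorem abs_sub_pred_le_ciSup {s : Finset ℕ} {g ε : ℕ → ℝ} (hε : ∀ k ∈ s, 0 < ε k) {k : ℕ}
    (hk : k ∈ s) : |g k - g (k - 1)| ≤ ⨆ j ∈ s, ε j * |(g j - g (j - 1)) / ε j| := by
  have hscaled : ε k * |(g k - g (k - 1)) / ε k| = |g k - g (k - 1)| := by
    rw [abs_div, abs_of_pos (hε k hk), mul_div_cancel₀ _ (hε k hk).ne']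
  exact hscaled ▸ le_ciSup₂_of_mem (f := fun j => ε j * |(g j - g (j - 1)) / ε j|) hk

theorem dist_le_dist_mul_of_dist_succ_le {E : Type*} [PseudoMetricSpace E] {f : ℕ → E}
    {a b : ℕ} {M : ℝ} (hstep : ∀ k ∈ Ico a b, dist (f k) (f (k + 1)) ≤ M) {m n : ℕ}
    (hm : m ∈ Icc a b) (hn : n ∈ Icc a b) : dist (f m) (f n) ≤ dist m n * M := by
  wlog hmn : m ≤ n generalizing m n
  · rw [dist_comm, dist_comm m]
    exact this hn hm (le_of_not_ge hmn)
  rw [mem_Icc] at hm hn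
  calc dist (f m) (f n) ≤ ∑ k ∈ Ico m n, dist (f k) (f (k + 1)) := dist_le_Ico_sum_dist f hmn
    _ ≤ #(Ico m n) • M :=
        sum_le_card_nsmul _ _ _ fun k hk => hstep k (Ico_subset_Ico hm.1 hn.2 hk)
    _ = dist m n * M := by
        rw [Nat.card_Ico, nsmul_eq_mul, Nat.cast_sub hmn, Nat.dist_eq, abs_sub_comm,
          abs_of_nonneg (sub_nonneg.2 (Nat.cast_le.2 hmn))]

theorem abs_mul_sum_le_sum_mul_abs_sub {ι : Type*} {s : Finset ι} {w g : ι → ℝ}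
    (hw : ∀ j ∈ s, 0 ≤ w j) (hmean : ∑ j ∈ s, w j * g j = 0) (i : ι) :
    |g i| * ∑ j ∈ s, w j ≤ ∑ j ∈ s, w j * |g i - g j| := by
  have hcentered : g i * ∑ j ∈ s, w j = ∑ j ∈ s, w j * (g i - g j) := by
    simp only [mul_sub, sum_sub_distrib, hmean, sub_zero, mul_sum, mul_comm]
  calc |g i| * ∑ j ∈ s, w j = |∑ j ∈ s, w j * (g i - g j)| := by
        rw [← hcentered, abs_mul, abs_of_nonneg (sum_nonneg hw)]
    _ ≤ ∑ j ∈ s, |w j * (g i - g j)| := abs_sum_le_sum_abs _ _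
    _ = ∑ j ∈ s, w j * |g i - g j| :=
        sum_congr rfl fun j hj => by rw [abs_mul, abs_of_nonneg (hw j hj)]

theorem sum_Icc_abs_sub_le {L i : ℕ} (hi : i ∈ Icc 1 L) :
    ∑ j ∈ Icc 1 L, |(i : ℝ) - j| ≤ L * (L - 1) / 2 := by
  have hreflect : ∑ j ∈ Icc 1 L, |(i : ℝ) - j| = ∑ j ∈ Icc 1 L, |(i : ℝ) - (L + 1 - j)| := by
    have h := sum_Ico_reflect (fun j => |(i : ℝ) - j|) 1 (Nat.le_succ (L + 1))
    rw [Nat.add_sub_cancel_left, Nat.add_sub_cancel] at h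
    rw [← Ico_add_one_right_eq_Icc, ← h]
    refine sum_congr rfl fun j hj => ?_
    rw [Nat.cast_sub (mem_Ico.1 hj).2.le, Nat.cast_add_one]
  have hpair : ∀ j ∈ Icc 1 L, |(i : ℝ) - j| + |(i : ℝ) - (L + 1 - j)| ≤ L - 1 := by
    intro j hj
    rw [mem_Icc] at hi hj
    have hi1 : (1 : ℝ) ≤ i := by exact_mod_cast hi.1
    have hiL : (i : ℝ) ≤ L := by exact_mod_cast hi.2
    have hj1 : (1 : ℝ) ≤ j := by exact_mod_cast hj.1
    have hjL : (j : ℝ) ≤ L := by exact_mod_cast hj.2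
    rcases abs_cases ((i : ℝ) - j) with ⟨h₁, _⟩ | ⟨h₁, _⟩ <;>
      rcases abs_cases ((i : ℝ) - (L + 1 - j)) with ⟨h₂, _⟩ | ⟨h₂, _⟩ <;>
      linarith
  have := sum_le_sum hpair
  rw [sum_add_distrib, ← hreflect, sum_const, Nat.card_Icc, nsmul_eq_mul,
    Nat.add_sub_cancel] at this
  linarith

theorem discrete_poincare_sup_general (L : ℕ) (g ε0 ε1 : ℕ → ℝ)
    (hε0 : ∀ i ∈ Finset.Icc 1 L, 0 < ε0 i)
    (hε1 : ∀ i ∈ Finset.Icc 1 L, 0 < ε1 i)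
    (hmean : ∑ i ∈ Finset.Icc 1 L, ε0 i * g i = 0) :
    ∀ i ∈ Finset.Icc 1 L,
      |g i| ≤ (1 / 2) * ((L : ℝ) ^ 2 * (⨆ j ∈ Finset.Icc 1 L, ε0 j) /
          ∑ j ∈ Finset.Icc 1 L, ε0 j) *
        (⨆ k ∈ Finset.Icc 2 L, ε1 k * |(g k - g (k - 1)) / ε1 k|) := by
  intro i hi
  set E := ⨆ j ∈ Icc 1 L, ε0 j
  set M := ⨆ k ∈ Icc 2 L, ε1 k * |(g k - g (k - 1)) / ε1 k|
  set h := ∑ j ∈ Icc 1 L, ε0 j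
  have hh : 0 < h := sum_pos hε0 ⟨i, hi⟩
  have hE : ∀ j ∈ Icc 1 L, ε0 j ≤ E := fun j hj => le_ciSup₂_of_mem hj
  have hE0 : 0 ≤ E := (hε0 i hi).le.trans (hE i hi)
  have hM0 : 0 ≤ M := Real.iSup_nonneg fun k => Real.iSup_nonneg fun hk =>
    mul_nonneg (hε1 k (Icc_subset_Icc_left one_le_two hk)).le (abs_nonneg _)
  have hstep : ∀ k ∈ Ico 1 L, dist (g k) (g (k + 1)) ≤ M := fun k hk => by
    have hk' : k + 1 ∈ Icc 2 L := by simp only [mem_Ico, mem_Icc] at hk ⊢; omega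
    have := abs_sub_pred_le_ciSup (g := g) (fun k hk => hε1 k (Icc_subset_Icc_left one_le_two hk)) hk'
    rwa [Nat.add_sub_cancel, ← Real.dist_eq, dist_comm] at this
  have hlip : ∀ j ∈ Icc 1 L, |g i - g j| ≤ |(i : ℝ) - j| * M := fun j hj =>
    dist_le_dist_mul_of_dist_succ_le hstep hi hj
  rw [show 1 / 2 * ((L : ℝ) ^ 2 * E / h) * M = E * M * (L ^ 2 / 2) / h by ring, le_div_iff₀ hh]
  calc |g i| * h ≤ ∑ j ∈ Icc 1 L, ε0 j * |g i - g j| :=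
        abs_mul_sum_le_sum_mul_abs_sub (fun j hj => (hε0 j hj).le) hmean i
    _ ≤ ∑ j ∈ Icc 1 L, E * (|(i : ℝ) - j| * M) := sum_le_sum fun j hj =>
        mul_le_mul (hE j hj) (hlip j hj) (abs_nonneg _) hE0
    _ = E * M * ∑ j ∈ Icc 1 L, |(i : ℝ) - j| := by
        rw [mul_sum]; exact sum_congr rfl fun _ _ => by ring
    _ ≤ E * M * (L * (L - 1) / 2) := by gcongr; exact sum_Icc_abs_sub_le hi
    _ ≤ E * M * (L ^ 2 / 2) := by gcongr; nlinarith [(L.cast_nonneg : (0 : ℝ) ≤ L)]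

/-- Discrete Poincaré inequality (sup-norm version) on a non-uniform mesh. -/
theorem discrete_poincare_sup (L : ℕ) (hL : 1 ≤ L) (g ε0 ε1 : ℕ → ℝ)
    (hε0 : ∀ i ∈ Finset.Icc 1 L, 0 < ε0 i)
    (hε1 : ∀ i ∈ Finset.Icc 1 L, 0 < ε1 i)
    (hmean : ∑ i ∈ Finset.Icc 1 L, ε0 i * g i = 0) :
    ∀ i ∈ Finset.Icc 1 L,
      |g i| ≤ (1 / 2) * ((L : ℝ) ^ 2 * (⨆ j ∈ Finset.Icc 1 L, ε0 j) /
          ∑ j ∈ Finset.Icc 1 L, ε0 j) *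
        (⨆ k ∈ Finset.Icc 2 L, ε1 k * |(g k - g (k - 1)) / ε1 k|) :=
  discrete_poincare_sup_general L g ε0 ε1 hε0 hε1 hmean
end

section
/- Bound on perturbed trapezoidal quadrature: with the setup of the previous statement, |⟨f,v⟩_r − ⟨f,v⟩_ε| ≤ (1/8) ε² · (∑_{k ∈ K_U} ε |f'_{ℓ_k+1}|²)^{1/2} · (∑_{ℓ} ε |v'_ℓ|²)^{1/2}, using θ(1−θ) ≤ 1/4 and Cauchy–Schwarz. -/
/-! Around each node `k ∈ K` the perturbed rule moves part of the weights `ε/2` of the nodes `k`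
and `k + 1` to the point `k + θ k`, where the piecewise linear `f` and `v` take their interpolated
values. For two linear functions, `θ f(k+1) v(k+1) + (1 - θ) f(k) v(k)` exceeds the product of the
interpolated values by exactly `θ (1 - θ) Δf Δv`, so the quadrature error is
`-(ε/2) ∑_{k ∈ K} θ (1 - θ) Δf Δv`; periodicity matches the node `ℓ = N` of the sums with `k = 0`.
The bound then follows from `θ (1 - θ) ≤ 1/4` and Cauchy–Schwarz. -/

open Finset

theorem Finset.sum_Icc_one_eq_sum_range_succ {M : Type*} [AddCommMonoid M] (N : ℕ) (g : ℕ → M) :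
    ∑ ℓ ∈ Icc 1 N, g ℓ = ∑ k ∈ range N, g (k + 1) := by
  rw [← Ico_add_one_right_eq_Icc, sum_Ico_eq_sum_range, Nat.add_sub_cancel]
  simp only [add_comm 1]

theorem Finset.sum_Icc_one_eq_sum_range_of_eq {M : Type*} [AddCancelCommMonoid M] {N : ℕ}
    {g : ℕ → M} (hg : g N = g 0) : ∑ ℓ ∈ Icc 1 N, g ℓ = ∑ k ∈ range N, g k := by
  rw [sum_Icc_one_eq_sum_range_succ]
  have := sum_range_succ' g N
  rw [sum_range_succ, hg, add_left_inj] at this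
  exact this.symm

theorem Finset.sum_succ_le_sum_Icc_one {M : Type*} [AddCommMonoid M] [PartialOrder M]
    [IsOrderedAddMonoid M] {K : Finset ℕ} {N : ℕ} (hK : K ⊆ range N) {g : ℕ → M}
    (hg : ∀ ℓ, 0 ≤ g ℓ) : ∑ k ∈ K, g (k + 1) ≤ ∑ ℓ ∈ Icc 1 N, g ℓ := by
  rw [sum_Icc_one_eq_sum_range_succ]
  exact sum_le_sum_of_subset_of_nonneg hK fun k _ _ ↦ hg (k + 1)

theorem Real.abs_sum_mul_one_sub_mul_le {ι : Type*} (s : Finset ι) {θ : ι → ℝ}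
    (hθ : ∀ i ∈ s, 0 ≤ θ i ∧ θ i ≤ 1) (a b : ι → ℝ) :
    |∑ i ∈ s, θ i * (1 - θ i) * (a i * b i)| ≤
      1 / 4 * (√(∑ i ∈ s, a i ^ 2) * √(∑ i ∈ s, b i ^ 2)) := by
  calc |∑ i ∈ s, θ i * (1 - θ i) * (a i * b i)|
      ≤ ∑ i ∈ s, |θ i * (1 - θ i) * (a i * b i)| := abs_sum_le_sum_abs _ _
    _ ≤ ∑ i ∈ s, 1 / 4 * (|a i| * |b i|) := by
        refine sum_le_sum fun i hi ↦ ?_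
        obtain ⟨h0, h1⟩ := hθ i hi
        have hθ0 : 0 ≤ θ i * (1 - θ i) := mul_nonneg h0 (by linarith)
        have hθ4 : θ i * (1 - θ i) ≤ 1 / 4 := by nlinarith [sq_nonneg (θ i - 1 / 2)]
        rw [abs_mul _ (a i * b i), abs_of_nonneg hθ0, abs_mul]
        exact mul_le_mul_of_nonneg_right hθ4 (by positivity)
    _ = 1 / 4 * ∑ i ∈ s, |a i| * |b i| := by rw [mul_sum]
    _ ≤ 1 / 4 * (√(∑ i ∈ s, a i ^ 2) * √(∑ i ∈ s, b i ^ 2)) := by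
        gcongr
        simpa only [sq_abs] using sum_mul_le_sqrt_mul_sqrt s (fun i ↦ |a i|) fun i ↦ |b i|

theorem Real.sqrt_sum_mul_div_sq {ι : Type*} (s : Finset ι) {ε : ℝ} (hε : 0 ≤ ε) (a : ι → ℝ) :
    √(∑ i ∈ s, ε * (a i / ε) ^ 2) = √(∑ i ∈ s, a i ^ 2) / √ε := by
  have : ∑ i ∈ s, ε * (a i / ε) ^ 2 = (∑ i ∈ s, a i ^ 2) / ε := by
    rw [sum_div]
    refine sum_congr rfl fun i _ ↦ ?_
    rcases hε.eq_or_lt with rfl | hε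
    · simp
    · field_simp
  rw [this, sqrt_div' _ hε]

theorem Real.sq_mul_div_sqrt_mul_div_sqrt {ε : ℝ} (hε : 0 ≤ ε) (x y : ℝ) :
    ε ^ 2 * (x / √ε) * (y / √ε) = ε * (x * y) := by
  rw [mul_assoc, div_mul_div_comm, Real.mul_self_sqrt hε]
  rcases hε.eq_or_lt with rfl | hεpos
  · simp
  · field_simp

noncomputable def perturbedTrapezoidSum (N : ℕ) (K : Finset ℕ) (θ : ℕ → ℝ) (ε : ℝ)
    (f v : ℕ → ℝ) : ℝ :=
  (∑ ℓ ∈ Icc 1 N,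
      (1 / 2) * ((if ℓ - 1 ∈ K then 1 - θ (ℓ - 1) else 1) * ε +
        (if ℓ % N ∈ K then θ (ℓ % N) else 1) * ε) * (f ℓ * v ℓ)) +
    ∑ k ∈ K, (1 / 2) * ε *
      (((1 - θ k) * f k + θ k * f (k + 1)) * ((1 - θ k) * v k + θ k * v (k + 1)))

noncomputable def trapezoidSum (N : ℕ) (ε : ℝ) (f v : ℕ → ℝ) : ℝ :=
  ∑ ℓ ∈ Icc 1 N, ε * (f ℓ * v ℓ)

theorem perturbedTrapezoidSum_sub_trapezoidSum {N : ℕ} {K : Finset ℕ} (hK : K ⊆ range N)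
    (θ : ℕ → ℝ) (ε : ℝ) {f v : ℕ → ℝ} (hf : f N = f 0) (hv : v N = v 0) :
    perturbedTrapezoidSum N K θ ε f v - trapezoidSum N ε f v =
      -(ε / 2) * ∑ k ∈ K, θ k * (1 - θ k) * ((f (k + 1) - f k) * (v (k + 1) - v k)) := by
  set w : ℕ → ℝ := fun k ↦ if k ∈ K then θ k else 0
  set u : ℕ → ℝ := fun k ↦ if k ∈ K then 1 - θ k else 0
  set left : ℕ → ℝ := fun ℓ ↦ -(ε / 2) * w (ℓ - 1) * (f ℓ * v ℓ)
  set right : ℕ → ℝ := fun ℓ ↦ -(ε / 2) * u (ℓ % N) * (f ℓ * v ℓ)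
  have hright : right N = right 0 := by simp only [right, Nat.mod_self, Nat.zero_mod, hf, hv]
  calc perturbedTrapezoidSum N K θ ε f v - trapezoidSum N ε f v
      = ∑ ℓ ∈ Icc 1 N, (left ℓ + right ℓ) + ∑ k ∈ K, (1 / 2) * ε *
          (((1 - θ k) * f k + θ k * f (k + 1)) * ((1 - θ k) * v k + θ k * v (k + 1))) := by
        rw [perturbedTrapezoidSum, trapezoidSum, add_sub_right_comm, ← sum_sub_distrib]
        congr 1
        refine sum_congr rfl fun ℓ _ ↦ ?_
        simp only [left, right, w, u]
        split_ifs <;> ring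
    _ = ∑ k ∈ range N, (left (k + 1) + right k) + ∑ k ∈ K, (1 / 2) * ε *
          (((1 - θ k) * f k + θ k * f (k + 1)) * ((1 - θ k) * v k + θ k * v (k + 1))) := by
        rw [sum_add_distrib, sum_add_distrib, sum_Icc_one_eq_sum_range_succ,
          sum_Icc_one_eq_sum_range_of_eq hright]
    _ = ∑ k ∈ K, -(ε / 2) * (θ k * (f (k + 1) * v (k + 1)) + (1 - θ k) * (f k * v k)) +
          ∑ k ∈ K, (1 / 2) * ε *
          (((1 - θ k) * f k + θ k * f (k + 1)) * ((1 - θ k) * v k + θ k * v (k + 1))) := by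
        congr 1
        rw [← inter_eq_right.mpr hK, ← sum_ite_mem]
        refine sum_congr rfl fun k hk ↦ ?_
        simp only [left, right, w, u, Nat.add_sub_cancel, Nat.mod_eq_of_lt (mem_range.mp hk)]
        split_ifs <;> ring
    _ = _ := by
        rw [← sum_add_distrib, mul_sum]
        exact sum_congr rfl fun k _ ↦ by ring

theorem perturbed_trapezoidal_bound_general
    (N : ℕ) (f v : ℕ → ℝ)
    (hfper : ∀ ℓ, f (ℓ + N) = f ℓ) (hvper : ∀ ℓ, v (ℓ + N) = v ℓ)
    (KU : Finset ℕ) (hKU : KU ⊆ Finset.range N)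
    (θ : ℕ → ℝ) (hθ : ∀ k ∈ KU, 0 < θ k ∧ θ k < 1) :
    |((∑ ℓ ∈ Finset.Icc 1 N,
          (1 / 2) * ((if ℓ - 1 ∈ KU then 1 - θ (ℓ - 1) else 1) * (N : ℝ)⁻¹ +
              (if ℓ % N ∈ KU then θ (ℓ % N) else 1) * (N : ℝ)⁻¹) * (f ℓ * v ℓ)) +
        ∑ k ∈ KU, (1 / 2) * (N : ℝ)⁻¹ *
          (((1 - θ k) * f k + θ k * f (k + 1)) * ((1 - θ k) * v k + θ k * v (k + 1)))) -
      ∑ ℓ ∈ Finset.Icc 1 N, (N : ℝ)⁻¹ * (f ℓ * v ℓ)| ≤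
    (1 / 8) * (N : ℝ)⁻¹ ^ 2 *
      Real.sqrt (∑ k ∈ KU, (N : ℝ)⁻¹ * ((f (k + 1) - f k) / (N : ℝ)⁻¹) ^ 2) *
      Real.sqrt (∑ ℓ ∈ Finset.Icc 1 N, (N : ℝ)⁻¹ * ((v ℓ - v (ℓ - 1)) / (N : ℝ)⁻¹) ^ 2) := by
  set ε : ℝ := (N : ℝ)⁻¹
  have hε : 0 ≤ ε := by positivity
  change |perturbedTrapezoidSum N KU θ ε f v - trapezoidSum N ε f v| ≤ _
  rw [perturbedTrapezoidSum_sub_trapezoidSum hKU θ ε (by simpa using hfper 0)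
    (by simpa using hvper 0), Real.sqrt_sum_mul_div_sq _ hε, Real.sqrt_sum_mul_div_sq _ hε]
  set Sf := ∑ k ∈ KU, (f (k + 1) - f k) ^ 2
  set Sv := ∑ ℓ ∈ Icc 1 N, (v ℓ - v (ℓ - 1)) ^ 2
  rw [mul_assoc (1 / 8) (ε ^ 2), mul_assoc (1 / 8), Real.sq_mul_div_sqrt_mul_div_sqrt hε,
    abs_mul, abs_neg, abs_of_nonneg (by positivity : 0 ≤ ε / 2)]
  calc ε / 2 * |∑ k ∈ KU, θ k * (1 - θ k) * ((f (k + 1) - f k) * (v (k + 1) - v k))|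
      ≤ ε / 2 * (1 / 4 * (√Sf * √(∑ k ∈ KU, (v (k + 1) - v k) ^ 2))) := by
        gcongr
        exact Real.abs_sum_mul_one_sub_mul_le KU (fun k hk ↦ ⟨(hθ k hk).1.le, (hθ k hk).2.le⟩) _ _
    _ ≤ ε / 2 * (1 / 4 * (√Sf * √Sv)) := by
        gcongr
        simpa using sum_succ_le_sum_Icc_one hKU fun ℓ ↦ sq_nonneg (v ℓ - v (ℓ - 1))
    _ = 1 / 8 * (ε * (√Sf * √Sv)) := by ring

/-- Bound on the perturbed trapezoidal quadrature error, obtained from the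
quadrature identity via `θ(1−θ) ≤ 1/4` and the Cauchy–Schwarz inequality. -/
theorem perturbed_trapezoidal_bound
    (N : ℕ) (hN : 0 < N) (f v : ℕ → ℝ)
    (hfper : ∀ ℓ, f (ℓ + N) = f ℓ) (hvper : ∀ ℓ, v (ℓ + N) = v ℓ)
    (KU : Finset ℕ) (hKU : KU ⊆ Finset.range N)
    (θ : ℕ → ℝ) (hθ : ∀ k ∈ KU, 0 < θ k ∧ θ k < 1) :
    |((∑ ℓ ∈ Finset.Icc 1 N,
          (1 / 2) * ((if ℓ - 1 ∈ KU then 1 - θ (ℓ - 1) else 1) * (N : ℝ)⁻¹ +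
              (if ℓ % N ∈ KU then θ (ℓ % N) else 1) * (N : ℝ)⁻¹) * (f ℓ * v ℓ)) +
        ∑ k ∈ KU, (1 / 2) * (N : ℝ)⁻¹ *
          (((1 - θ k) * f k + θ k * f (k + 1)) * ((1 - θ k) * v k + θ k * v (k + 1)))) -
      ∑ ℓ ∈ Finset.Icc 1 N, (N : ℝ)⁻¹ * (f ℓ * v ℓ)| ≤
    (1 / 8) * (N : ℝ)⁻¹ ^ 2 *
      Real.sqrt (∑ k ∈ KU, (N : ℝ)⁻¹ * ((f (k + 1) - f k) / (N : ℝ)⁻¹) ^ 2) *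
      Real.sqrt (∑ ℓ ∈ Finset.Icc 1 N, (N : ℝ)⁻¹ * ((v ℓ - v (ℓ - 1)) / (N : ℝ)⁻¹) ^ 2) :=
  perturbed_trapezoidal_bound_general N f v hfper hvper KU hKU θ hθ
end
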